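/- arXiv:1910.10441 — 5 statements merged into one kernel-verified Lean document; each statement's English description precedes it below -/
import Mathlib

section
/- If a flow x hashed to a bucket has sum S(x) strictly greater than half of the bucket's total value count V, then at the end of processing, the candidate key stored in the bucket (via the generalized majority vote algorithm with nonnegative-value updates) equals x. -/
/-- State of a bucket in MV-Sketch: total value `V`, candidate key `K`,
indicator counter `C`. -/
structure Bucket (α : Type*) where
  V : ℝ
  K : α
  C : ℝ

/-- One update of the generalized majority vote algorithm on input `(y, v)`. -/
noncomputable def Bucket.step {α : Type*} [DecidableEq α] (b : Bucket α) (p : α × ℝ) :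
    Bucket α :=
  if p.1 = b.K then ⟨b.V + p.2, b.K, b.C + p.2⟩
  else if b.C - p.2 < 0 then ⟨b.V + p.2, p.1, p.2 - b.C⟩
  else ⟨b.V + p.2, b.K, b.C - p.2⟩

/-- State of the bucket after processing the whole stream `l`, starting from
an arbitrary initial key `k0`, `V = 0`, `C = 0`. -/
noncomputable def runBucket {α : Type*} [DecidableEq α] (k0 : α) (l : List (α × ℝ)) :
    Bucket α :=
  l.foldl Bucket.step ⟨0, k0, 0⟩

/-- Total value of flow `x` in the stream `l`. -/
def flowSum {α : Type*} [DecidableEq α] (x : α) (l : List (α × ℝ)) : ℝ :=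
  ((l.filter fun p => p.1 = x).map Prod.snd).sum

/-!
Read the counter as a signed count for `x`: `+C` when the stored key is `x`, `-C` otherwise.
Each update `(y, v)` raises this signed count by at least `v` when `y = x` and lowers it by
at most `v` otherwise, so at the end it is at least `S(x) - (V - S(x)) = 2 S(x) - V > 0`.
As `C ≥ 0` throughout, a positive signed count forces the stored key to be `x`.
-/

theorem flowSum_cons {α : Type*} [DecidableEq α] (x : α) (p : α × ℝ) (l : List (α × ℝ)) :
    flowSum x (p :: l) = (if p.1 = x then p.2 else 0) + flowSum x l := by
  unfold flowSum
  by_cases h : p.1 = x <;> simp [h]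

namespace Bucket

variable {α : Type*} [DecidableEq α]

noncomputable def signedCount (x : α) (b : Bucket α) : ℝ :=
  if b.K = x then b.C else -b.C

theorem step_V (b : Bucket α) (p : α × ℝ) : (b.step p).V = b.V + p.2 := by
  unfold step
  split_ifs <;> rfl

theorem step_C_nonneg {b : Bucket α} {p : α × ℝ} (hC : 0 ≤ b.C) (hp : 0 ≤ p.2) :
    0 ≤ (b.step p).C := by
  unfold step
  split_ifs <;> linarith

theorem signedCount_add_le_signedCount_step (x : α) {b : Bucket α} {p : α × ℝ}
    (hC : 0 ≤ b.C) (hp : 0 ≤ p.2) :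
    b.signedCount x + (if p.1 = x then p.2 else -p.2) ≤ (b.step p).signedCount x := by
  unfold step signedCount
  split_ifs <;> grind

theorem foldl_step_V (l : List (α × ℝ)) (b : Bucket α) :
    (l.foldl step b).V = b.V + (l.map Prod.snd).sum := by
  induction l generalizing b with
  | nil => simp
  | cons p l ih => simp only [List.foldl_cons, ih, step_V, List.map_cons, List.sum_cons]; ring

theorem foldl_step_C_nonneg {l : List (α × ℝ)} (hl : ∀ p ∈ l, 0 ≤ p.2) {b : Bucket α}
    (hC : 0 ≤ b.C) : 0 ≤ (l.foldl step b).C := by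
  induction l generalizing b with
  | nil => exact hC
  | cons p l ih =>
    exact ih (fun q hq => hl q (.tail _ hq)) (step_C_nonneg hC (hl p List.mem_cons_self))

theorem signedCount_add_le_signedCount_foldl_step (x : α) {l : List (α × ℝ)}
    (hl : ∀ p ∈ l, 0 ≤ p.2) {b : Bucket α} (hC : 0 ≤ b.C) :
    b.signedCount x + (2 * flowSum x l - (l.map Prod.snd).sum)
      ≤ (l.foldl step b).signedCount x := by
  induction l generalizing b with
  | nil => simp [flowSum]
  | cons p l ih =>
    have hp : 0 ≤ p.2 := hl p List.mem_cons_self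
    have hstep := signedCount_add_le_signedCount_step x hC hp
    have htail := ih (fun q hq => hl q (.tail _ hq)) (step_C_nonneg hC hp)
    have hcontrib : 2 * (if p.1 = x then p.2 else 0) - p.2 = if p.1 = x then p.2 else -p.2 := by
      split_ifs <;> ring
    rw [flowSum_cons, List.map_cons, List.sum_cons, List.foldl_cons]
    linarith

theorem K_eq_of_signedCount_pos {x : α} {b : Bucket α} (hC : 0 ≤ b.C)
    (hpos : 0 < b.signedCount x) : b.K = x := by
  by_contra hK
  rw [signedCount, if_neg hK] at hpos
  linarith

end Bucket

/-- If a flow `x` has sum strictly greater than half the bucket's total value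
count, then at the end of the stream the candidate key stored in the bucket
equals `x`. -/
theorem majority_flow_is_stored {α : Type*} [DecidableEq α] (k0 x : α)
    (l : List (α × ℝ)) (hv : ∀ p ∈ l, 0 ≤ p.2)
    (hmaj : flowSum x l > (runBucket k0 l).V / 2) :
    (runBucket k0 l).K = x := by
  unfold runBucket at hmaj ⊢
  have h0 : (0 : ℝ) ≤ (⟨0, k0, 0⟩ : Bucket α).C := le_rfl
  have hstart : Bucket.signedCount x ⟨0, k0, 0⟩ = 0 := by simp [Bucket.signedCount]
  have hcount := Bucket.signedCount_add_le_signedCount_foldl_step x hv h0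
  rw [Bucket.foldl_step_V, zero_add] at hmaj
  exact Bucket.K_eq_of_signedCount_pos (Bucket.foldl_step_C_nonneg hv h0) (by linarith)
end

section
/- In scalable heavy hitter detection with each packet of a flow dispatched uniformly to d of q detectors each running an independent MV-Sketch, the controller reports every heavy hitter with probability at least (1−δ)^d, and falsely reports a non-heavy hitter whose sum is at most (d/q)(φ − ε/2)S with probability at most 1 − (1−δ)^d. -/
open MeasureTheory ProbabilityTheory
open scoped Classical

/-- Scalable heavy hitter detection. A flow `x` with total sum `Sx` is split
uniformly across `d ≤ q` detectors (each seeing sum `Sx/d`), each running an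
independent MV-Sketch. Detector `i` reports `x` (event `Rep i`) with its local
estimate `est i`; the controller declares `x` a heavy hitter iff the sum of
the reported estimates is at least `φS`.
(1) If `x` is a heavy hitter (`Sx ≥ φS`), each detector's estimate upon
reporting is at least its local sum `Sx/d`, and each detector reports with
probability at least `1 − δ`, then the controller reports `x` with probability
at least `(1−δ)^d`.
(2) If `Sx ≤ (d/q)(φ − ε/2)S` and each detector reports with probability at
most `δ`, then the controller falsely reports `x` with probability at most
`1 − (1−δ)^d`. -/
theorem scalable_heavy_hitter_detection {Ω : Type*} [MeasurableSpace Ω]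
    (μ : Measure Ω) [IsProbabilityMeasure μ]
    (d q : ℕ) (hd : 0 < d) (hdq : d ≤ q)
    (δ ε φ S Sx : ℝ) (hδ0 : 0 < δ) (hδ1 : δ < 1) (hε : 0 < ε)
    (hφ : 0 < φ) (hφS : 0 < φ * S)
    (Rep : Fin d → Set Ω) (hRepMeas : ∀ i, MeasurableSet (Rep i))
    (hind : iIndepSet Rep μ)
    (est : Fin d → Ω → ℝ) :
    ((φ * S ≤ Sx) →
      (∀ i ω, ω ∈ Rep i → Sx / d ≤ est i ω) →
      (∀ i, ENNReal.ofReal (1 - δ) ≤ μ (Rep i)) →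
      ENNReal.ofReal ((1 - δ) ^ d) ≤
        μ {ω | φ * S ≤ ∑ i, if ω ∈ Rep i then est i ω else 0}) ∧
    ((Sx ≤ ((d : ℝ) / q) * (φ - ε / 2) * S) →
      (∀ i ω, ω ∈ Rep i → 0 ≤ est i ω) →
      (∀ i, μ (Rep i) ≤ ENNReal.ofReal δ) →
      μ {ω | φ * S ≤ ∑ i, if ω ∈ Rep i then est i ω else 0} ≤
        ENNReal.ofReal (1 - (1 - δ) ^ d)) := by
  have hind' : ProbabilityTheory.iIndep
      (fun i => MeasurableSpace.generateFrom {Rep i}) μ := hind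
  constructor
  · intro hheavy hest hrep
    have hsub : (⋂ i, Rep i) ⊆
        {ω | φ * S ≤ ∑ i, if ω ∈ Rep i then est i ω else 0} := by
      intro ω hω
      simp only [Set.mem_iInter] at hω
      have : ∑ i : Fin d, (if ω ∈ Rep i then est i ω else 0)
          = ∑ i : Fin d, est i ω := Finset.sum_congr rfl (fun i _ => if_pos (hω i))
      simp only [Set.mem_setOf_eq, this]
      calc φ * S ≤ Sx := hheavy
        _ = ∑ _i : Fin d, Sx / d := by
            rw [Finset.sum_const, Finset.card_univ, Fintype.card_fin, nsmul_eq_mul]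
            field_simp
        _ ≤ ∑ i : Fin d, est i ω := Finset.sum_le_sum (fun i _ => hest i ω (hω i))
    have hmeas : μ (⋂ i, Rep i) = ∏ i, μ (Rep i) :=
      hind'.meas_iInter (fun i =>
        MeasurableSpace.measurableSet_generateFrom (Set.mem_singleton _))
    calc ENNReal.ofReal ((1 - δ) ^ d)
        = ∏ _i : Fin d, ENNReal.ofReal (1 - δ) := by
          rw [Finset.prod_const, Finset.card_univ, Fintype.card_fin,
            ← ENNReal.ofReal_pow (by linarith)]
      _ ≤ ∏ i, μ (Rep i) := Finset.prod_le_prod' (fun i _ => hrep i)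
      _ = μ (⋂ i, Rep i) := hmeas.symm
      _ ≤ _ := measure_mono hsub
  · intro _ _ hrep
    have hsub : {ω | φ * S ≤ ∑ i, if ω ∈ Rep i then est i ω else 0}
        ⊆ (⋂ i, (Rep i)ᶜ)ᶜ := by
      intro ω hω
      simp only [Set.mem_setOf_eq] at hω
      simp only [Set.mem_compl_iff, Set.mem_iInter, not_forall]
      by_contra h
      push_neg at h
      have : ∑ i : Fin d, (if ω ∈ Rep i then est i ω else 0) = 0 :=
        Finset.sum_eq_zero (fun i _ => if_neg (h i))
      rw [this] at hω; linarith
    have hmeasC : μ (⋂ i, (Rep i)ᶜ) = ∏ i, μ ((Rep i)ᶜ) :=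
      hind'.meas_iInter (fun i =>
        (MeasurableSpace.measurableSet_generateFrom (Set.mem_singleton _)).compl)
    have hcompl : ∀ i, ENNReal.ofReal (1 - δ) ≤ μ ((Rep i)ᶜ) := by
      intro i
      rw [measure_compl (hRepMeas i) (measure_ne_top μ _), measure_univ]
      have h1 : μ (Rep i) ≤ ENNReal.ofReal δ := hrep i
      have : 1 - ENNReal.ofReal δ ≤ 1 - μ (Rep i) := tsub_le_tsub_left h1 1
      refine le_trans ?_ this
      rw [← ENNReal.ofReal_one, ← ENNReal.ofReal_sub _ hδ0.le]
    have hlow : ENNReal.ofReal ((1 - δ) ^ d) ≤ μ (⋂ i, (Rep i)ᶜ) := by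
      rw [hmeasC]
      calc ENNReal.ofReal ((1 - δ) ^ d)
          = ∏ _i : Fin d, ENNReal.ofReal (1 - δ) := by
            rw [Finset.prod_const, Finset.card_univ, Fintype.card_fin,
              ← ENNReal.ofReal_pow (by linarith)]
        _ ≤ _ := Finset.prod_le_prod' (fun i _ => hcompl i)
    calc μ {ω | φ * S ≤ ∑ i, if ω ∈ Rep i then est i ω else 0}
        ≤ μ (⋂ i, (Rep i)ᶜ)ᶜ := measure_mono hsub
      _ = 1 - μ (⋂ i, (Rep i)ᶜ) := by
          rw [measure_compl (MeasurableSet.iInter (fun i => (hRepMeas i).compl))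
            (measure_ne_top μ _), measure_univ]
      _ ≤ 1 - ENNReal.ofReal ((1 - δ) ^ d) := tsub_le_tsub_left hlow 1
      _ ≤ ENNReal.ofReal (1 - (1 - δ) ^ d) := by
          rw [ENNReal.ofReal_sub _ (pow_nonneg (by linarith) d), ENNReal.ofReal_one]
end

section
/- In the merged MV-Sketch built from q independent per-detector sketches sharing the same hash functions, if flow x is a majority flow of merged bucket B(i,j) (i.e., S(x) > V_{i,j}/2 where V_{i,j} = Σ_k V^k_{i,j}), then the merged key K_{i,j} equals x, where K_{i,j} is chosen as the argmax over candidate keys K^k_{i,j} of the network-wide estimate e(y) = Σ_k [(V^k+C^k)/2 if K^k = y else (V^k−C^k)/2]. -/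
/-- Majority flow tracking in the merged MV-Sketch. Consider a merged bucket
built from `q` per-detector buckets `(V^k, K^k, C^k)` satisfying the
per-detector bucket bounds on the per-detector sums `S^k(x)` of flow `x`
(each packet appears at exactly one detector, so the network-wide sum is
`S(x) = Σ_k S^k(x)`). If `x` is a majority flow of the merged bucket, i.e.
`S(x) > (Σ_k V^k)/2`, then the merged key — the candidate key maximizing the
network-wide estimate `e(y) = Σ_k ((V^k + C^k)/2 if K^k = y else
(V^k − C^k)/2)` — equals `x`. -/
theorem merged_majority_flow_is_stored {α : Type*} [DecidableEq α]
    (q : ℕ) (V C : Fin q → ℝ) (K : Fin q → α) (hC : ∀ k, 0 ≤ C k)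
    (x : α) (Sx : Fin q → ℝ)
    (hbound : ∀ k, (K k = x → C k ≤ Sx k ∧ Sx k ≤ (V k + C k) / 2) ∧
                   (K k ≠ x → 0 ≤ Sx k ∧ Sx k ≤ (V k - C k) / 2))
    (hmaj : (∑ k, Sx k) > (∑ k, V k) / 2)
    (Kmerged : α) (hmem : Kmerged ∈ Set.range K)
    (hargmax : ∀ y ∈ Set.range K,
      (∑ k, if K k = y then (V k + C k) / 2 else (V k - C k) / 2) ≤
        (∑ k, if K k = Kmerged then (V k + C k) / 2 else (V k - C k) / 2)) :
    Kmerged = x := by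
  by_contra hne
  have hxS : ∀ k, Sx k ≤ if K k = x then (V k + C k)/2 else (V k - C k)/2 := by
    intro k
    by_cases h : K k = x
    · simpa [h] using ((hbound k).1 h).2
    · simpa [h] using ((hbound k).2 h).2
  have hex : (∑ k, Sx k) ≤ ∑ k, if K k = x then (V k + C k)/2 else (V k - C k)/2 :=
    Finset.sum_le_sum fun k _ => hxS k
  have hxmem : x ∈ Set.range K := by
    by_contra hx
    have hk : ∀ k, K k ≠ x := fun k h => hx ⟨k, h⟩
    have h1 : (∑ k, Sx k) ≤ ∑ k, (V k - C k)/2 :=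
      Finset.sum_le_sum fun k _ => ((hbound k).2 (hk k)).2
    have h2 : (∑ k, (V k - C k)/2) ≤ (∑ k, V k)/2 := by
      rw [Finset.sum_div]
      exact Finset.sum_le_sum fun k _ => by linarith [hC k]
    linarith
  have hmax := hargmax x hxmem
  have hsum : (∑ k, if K k = x then (V k + C k)/2 else (V k - C k)/2)
      + (∑ k, if K k = Kmerged then (V k + C k)/2 else (V k - C k)/2) ≤ ∑ k, V k := by
    rw [← Finset.sum_add_distrib]
    refine Finset.sum_le_sum fun k _ => ?_
    by_cases h1 : K k = x
    · have h2 : K k ≠ Kmerged := fun h => hne (h.symm.trans h1)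
      rw [if_pos h1, if_neg h2]
      linarith
    · by_cases h2 : K k = Kmerged
      · simp only [if_neg h1, if_pos h2]
        linarith
      · simp only [if_neg h1, if_neg h2]
        linarith [hC k]
  linarith
end

section
/- For any two distinct keys y, z in the candidate set {K^1_{i,j},...,K^q_{i,j}}, the network-wide estimates satisfy e(y) + e(z) ≤ V_{i,j} = Σ_k V^k_{i,j}. -/
/-- For any two distinct keys `y, z` in the candidate set `{K^1, ..., K^q}`,
the network-wide estimates satisfy `e(y) + e(z) ≤ Σ_k V^k`, where
`e(y) = Σ_k ((V^k + C^k)/2 if K^k = y else (V^k − C^k)/2)` and all `C^k ≥ 0`. -/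
theorem networkwide_estimates_sum_le_total {α : Type*} [DecidableEq α]
    (q : ℕ) (V C : Fin q → ℝ) (K : Fin q → α) (hC : ∀ k, 0 ≤ C k)
    (y z : α) (hyz : y ≠ z) (hy : y ∈ Set.range K) (hz : z ∈ Set.range K) :
    (∑ k, if K k = y then (V k + C k) / 2 else (V k - C k) / 2) +
      (∑ k, if K k = z then (V k + C k) / 2 else (V k - C k) / 2) ≤
    ∑ k, V k := by
  rw [← Finset.sum_add_distrib]
  apply Finset.sum_le_sum
  intro k _
  have := hC k
  split_ifs with h1 h2 <;> try linarith
  exact absurd (h1.symm.trans h2) hyz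
end

section
/- After merging q MV-Sketch instances, for any flow x hashed to the merged bucket B(i,j): if the merged key K_{i,j} = x then C_{i,j} ≤ S(x) ≤ (V_{i,j}+C_{i,j})/2, and if K_{i,j} ≠ x then 0 ≤ S(x) ≤ (V_{i,j}−C_{i,j})/2, where S(x) is the network-wide sum of x. -/
/-- Per-bucket bounds for the merged MV-Sketch. The merged bucket has
`V = Σ_k V^k`, key `K` the candidate key maximizing the network-wide estimate
`e(y) = Σ_k ((V^k + C^k)/2 if K^k = y else (V^k − C^k)/2)`, and counter
`C = max (2·e(K) − V) 0`. For any flow `x` hashed to this bucket with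
network-wide sum `S(x) = Σ_k S^k(x)` satisfying the per-detector bounds and
`S(x) ≤ V`: if `K = x` then `C ≤ S(x) ≤ (V + C)/2`, otherwise
`0 ≤ S(x) ≤ (V − C)/2`. -/
theorem merged_bucket_bounds {α : Type*} [DecidableEq α]
    (q : ℕ) (V C : Fin q → ℝ) (K : Fin q → α) (hC : ∀ k, 0 ≤ C k)
    (x : α) (Sx : Fin q → ℝ)
    (hbound : ∀ k, (K k = x → C k ≤ Sx k ∧ Sx k ≤ (V k + C k) / 2) ∧
                   (K k ≠ x → 0 ≤ Sx k ∧ Sx k ≤ (V k - C k) / 2))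
    (hSV : (∑ k, Sx k) ≤ ∑ k, V k)
    (Kmerged : α) (hmem : Kmerged ∈ Set.range K)
    (hargmax : ∀ y ∈ Set.range K,
      (∑ k, if K k = y then (V k + C k) / 2 else (V k - C k) / 2) ≤
        (∑ k, if K k = Kmerged then (V k + C k) / 2 else (V k - C k) / 2)) :
    (Kmerged = x →
      max (2 * (∑ k, if K k = Kmerged then (V k + C k) / 2 else (V k - C k) / 2)
            - ∑ k, V k) 0 ≤ (∑ k, Sx k) ∧
      (∑ k, Sx k) ≤ ((∑ k, V k) +
        max (2 * (∑ k, if K k = Kmerged then (V k + C k) / 2 else (V k - C k) / 2)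
              - ∑ k, V k) 0) / 2) ∧
    (Kmerged ≠ x →
      0 ≤ (∑ k, Sx k) ∧
      (∑ k, Sx k) ≤ ((∑ k, V k) -
        max (2 * (∑ k, if K k = Kmerged then (V k + C k) / 2 else (V k - C k) / 2)
              - ∑ k, V k) 0) / 2) := by
  set e : α → ℝ := fun y => ∑ k, if K k = y then (V k + C k) / 2 else (V k - C k) / 2 with he
  have hS0 : 0 ≤ ∑ k, Sx k := by
    apply Finset.sum_nonneg
    intro k _
    by_cases h : K k = x
    · exact le_trans (hC k) ((hbound k).1 h).1
    · exact ((hbound k).2 h).1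
  have hSex : (∑ k, Sx k) ≤ e x := by
    apply Finset.sum_le_sum
    intro k _
    by_cases h : K k = x
    · simp only [h, if_pos]; exact ((hbound k).1 h).2
    · rw [if_neg h]; exact ((hbound k).2 h).2
  have hexe : e x ≤ e Kmerged := by
    by_cases hx : x ∈ Set.range K
    · exact hargmax x hx
    · apply Finset.sum_le_sum
      intro k _
      have h1 : K k ≠ x := fun h => hx ⟨k, h⟩
      rw [if_neg h1]
      by_cases h2 : K k = Kmerged
      · rw [if_pos h2]; linarith [hC k]
      · rw [if_neg h2]
  constructor
  · intro hKx
    subst hKx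
    have hlow : 2 * e Kmerged - (∑ k, V k) ≤ ∑ k, Sx k := by
      have : ∑ k, (2 * (if K k = Kmerged then (V k + C k) / 2 else (V k - C k) / 2) - V k)
          ≤ ∑ k, Sx k := by
        apply Finset.sum_le_sum
        intro k _
        by_cases h : K k = Kmerged
        · rw [if_pos h]
          have := ((hbound k).1 h).1
          linarith
        · rw [if_neg h]
          have := ((hbound k).2 h).1
          linarith [hC k]
      calc 2 * e Kmerged - (∑ k, V k)
          = ∑ k, (2 * (if K k = Kmerged then (V k + C k) / 2 else (V k - C k) / 2) - V k) := by
            rw [Finset.sum_sub_distrib, ← Finset.mul_sum]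
        _ ≤ ∑ k, Sx k := this
    constructor
    · exact max_le hlow hS0
    · rcases le_total (2 * e Kmerged - ∑ k, V k) 0 with h | h
      · rw [max_eq_right h]; linarith
      · rw [max_eq_left h]; linarith
  · intro hKx
    refine ⟨hS0, ?_⟩
    have hsum : (∑ k, Sx k) + e Kmerged ≤ ∑ k, V k := by
      have : ∑ k, (Sx k + (if K k = Kmerged then (V k + C k) / 2 else (V k - C k) / 2))
          ≤ ∑ k, V k := by
        apply Finset.sum_le_sum
        intro k _
        by_cases h : K k = Kmerged
        · rw [if_pos h]
          have h1 : K k ≠ x := by rw [h]; exact hKx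
          have := ((hbound k).2 h1).2
          linarith
        · rw [if_neg h]
          by_cases h1 : K k = x
          · have := ((hbound k).1 h1).2
            linarith
          · have := ((hbound k).2 h1).2
            linarith [hC k]
      calc (∑ k, Sx k) + e Kmerged
          = ∑ k, (Sx k + (if K k = Kmerged then (V k + C k) / 2 else (V k - C k) / 2)) := by
            rw [Finset.sum_add_distrib]
        _ ≤ ∑ k, V k := this
    rcases le_total (2 * e Kmerged - ∑ k, V k) 0 with h | h
    · rw [max_eq_right h]; linarith
    · rw [max_eq_left h]; linarith
end
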